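/- arXiv:1104.4816 — 5 statements merged into one kernel-verified Lean document; each statement's English description precedes it below -/
import Mathlib

section
/- Let z, w ∈ ℂ and let C and D be invertible upper triangular 3 × 3 complex matrices such that all three diagonal entries of C are equal to z and all three diagonal entries of D are equal to w. Then CDC = DCD if and only if C = D. -/
/-- Lemma 2.1 of the paper: if `C`, `D` are invertible upper
triangular `3 × 3` complex matrices with constant diagonals `z` and `w`
respectively, then `CDC = DCD` iff `C = D`. -/
theorem braid_unitriangular_iff_eq (z w : ℂ)
    (C D : Matrix (Fin 3) (Fin 3) ℂ)
    (hC : IsUnit C) (hD : IsUnit D)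
    (hCut : ∀ i j : Fin 3, j < i → C i j = 0)
    (hDut : ∀ i j : Fin 3, j < i → D i j = 0)
    (hCdiag : ∀ i : Fin 3, C i i = z)
    (hDdiag : ∀ i : Fin 3, D i i = w) :
    C * D * C = D * C * D ↔ C = D := by
  constructor
  · intro h
    have c10 : C 1 0 = 0 := hCut 1 0 (by decide)
    have c20 : C 2 0 = 0 := hCut 2 0 (by decide)
    have c21 : C 2 1 = 0 := hCut 2 1 (by decide)
    have d10 : D 1 0 = 0 := hDut 1 0 (by decide)
    have d20 : D 2 0 = 0 := hDut 2 0 (by decide)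
    have d21 : D 2 1 = 0 := hDut 2 1 (by decide)
    have c00 : C 0 0 = z := hCdiag 0
    have c11 : C 1 1 = z := hCdiag 1
    have c22 : C 2 2 = z := hCdiag 2
    have d00 : D 0 0 = w := hDdiag 0
    have d11 : D 1 1 = w := hDdiag 1
    have d22 : D 2 2 = w := hDdiag 2
    -- z ≠ 0 and w ≠ 0 from invertibility
    have hdetC : C.det = z ^ 3 := by
      rw [Matrix.det_fin_three, c10, c20, c21, c00, c11, c22]; ring
    have hdetD : D.det = w ^ 3 := by
      rw [Matrix.det_fin_three, d10, d20, d21, d00, d11, d22]; ring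
    have hz : z ≠ 0 := by
      have := (Matrix.isUnit_iff_isUnit_det C).mp hC
      rw [hdetC, isUnit_iff_ne_zero] at this
      exact fun hz0 => this (by rw [hz0]; ring)
    have hw : w ≠ 0 := by
      have := (Matrix.isUnit_iff_isUnit_det D).mp hD
      rw [hdetD, isUnit_iff_ne_zero] at this
      exact fun hw0 => this (by rw [hw0]; ring)
    have e : ∀ i j : Fin 3, (C * D * C) i j = (D * C * D) i j := fun i j => by rw [h]
    have e00 := e 0 0
    have e01 := e 0 1
    have e02 := e 0 2
    have e12 := e 1 2
    simp only [Matrix.mul_apply, Fin.sum_univ_three, c10, c20, c21, d10, d20, d21,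
      c00, c11, c22, d00, d11, d22, mul_zero, zero_mul, add_zero, zero_add] at e00 e01 e02 e12
    have hzw : z = w := by
      have h0 : z * w * (z - w) = 0 := by linear_combination e00
      rcases mul_eq_zero.mp h0 with h1 | h1
      · exact absurd h1 (mul_ne_zero hz hw)
      · exact sub_eq_zero.mp h1
    subst hzw
    have ha : C 0 1 = D 0 1 := by
      have h0 : z ^ 2 * (C 0 1 - D 0 1) = 0 := by linear_combination e01
      have := mul_eq_zero.mp h0
      rcases this with h1 | h1
      · exact absurd h1 (pow_ne_zero 2 hz)
      · exact sub_eq_zero.mp h1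
    have hc : C 1 2 = D 1 2 := by
      have h0 : z ^ 2 * (C 1 2 - D 1 2) = 0 := by linear_combination e12
      rcases mul_eq_zero.mp h0 with h1 | h1
      · exact absurd h1 (pow_ne_zero 2 hz)
      · exact sub_eq_zero.mp h1
    have hb : C 0 2 = D 0 2 := by
      rw [ha, hc] at e02
      have h0 : z ^ 2 * (C 0 2 - D 0 2) = 0 := by linear_combination e02
      rcases mul_eq_zero.mp h0 with h1 | h1
      · exact absurd h1 (pow_ne_zero 2 hz)
      · exact sub_eq_zero.mp h1
    ext i j
    fin_cases i <;> fin_cases j <;>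
      simp_all
  · rintro rfl
    rfl
end

section
/- Let n ≥ 1 and let A be an n × n complex matrix that is conjugate to a diagonal matrix whose n diagonal entries are pairwise distinct (i.e., A = P D P⁻¹ for some invertible P and diagonal D with pairwise distinct diagonal entries). If B and C are invertible n × n complex matrices that both commute with A and satisfy BCB = CBC, then B = C. -/
open Matrix

lemma diag_of_injective {n : ℕ} {d : Fin n → ℂ} (hd : Function.Injective d)
    {M : Matrix (Fin n) (Fin n) ℂ} (h : M * Matrix.diagonal d = Matrix.diagonal d * M) :
    M = Matrix.diagonal (fun i => M i i) := by
  ext i j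
  by_cases hij : i = j
  · subst hij; simp
  · rw [Matrix.diagonal_apply_ne _ hij]
    have hh := congrFun (congrFun h i) j
    rw [Matrix.mul_diagonal, Matrix.diagonal_mul] at hh
    have hdij : d j - d i ≠ 0 := sub_ne_zero.mpr (fun hh => hij (hd hh.symm))
    have : M i j * (d j - d i) = 0 := by ring_nf; linear_combination hh
    exact (mul_eq_zero.mp this).resolve_right hdij

/-- if `A` is conjugate to a diagonal matrix with pairwise
distinct diagonal entries, and `B`, `C` are invertible matrices commuting with
`A` that satisfy the braid relation `BCB = CBC`, then `B = C`. -/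
theorem braid_commute_distinct_eigenvalues (n : ℕ) (hn : 1 ≤ n)
    (A B C : Matrix (Fin n) (Fin n) ℂ)
    (P : GL (Fin n) ℂ) (d : Fin n → ℂ) (hd : Function.Injective d)
    (hA : A = (P : Matrix (Fin n) (Fin n) ℂ) * Matrix.diagonal d *
      ((P⁻¹ : GL (Fin n) ℂ) : Matrix (Fin n) (Fin n) ℂ))
    (hB : IsUnit B) (hC : IsUnit C)
    (hBA : B * A = A * B) (hCA : C * A = A * C)
    (hbraid : B * C * B = C * B * C) :
    B = C := by
  set Pm : Matrix (Fin n) (Fin n) ℂ := (P : Matrix (Fin n) (Fin n) ℂ) with hPm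
  set Pi : Matrix (Fin n) (Fin n) ℂ := ((P⁻¹ : GL (Fin n) ℂ) : Matrix (Fin n) (Fin n) ℂ) with hPiDef
  have hPPi : Pm * Pi = 1 := P.mul_inv
  have hPiP : Pi * Pm = 1 := P.inv_mul
  set B' := Pi * B * Pm with hB'
  set C' := Pi * C * Pm with hC'
  have key : ∀ M : Matrix (Fin n) (Fin n) ℂ, M * A = A * M →
      (Pi * M * Pm) * Matrix.diagonal d = Matrix.diagonal d * (Pi * M * Pm) := by
    intro M hM
    have h1 : Pi * (M * A) * Pm = Pi * (A * M) * Pm := by rw [hM]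
    rw [hA] at h1
    calc (Pi * M * Pm) * Matrix.diagonal d
        = (Pi * M * Pm) * Matrix.diagonal d * (Pi * Pm) := by rw [hPiP, mul_one]
      _ = Pi * (M * (Pm * Matrix.diagonal d * Pi)) * Pm := by noncomm_ring
      _ = Pi * ((Pm * Matrix.diagonal d * Pi) * M) * Pm := h1
      _ = (Pi * Pm) * Matrix.diagonal d * (Pi * M * Pm) := by noncomm_ring
      _ = Matrix.diagonal d * (Pi * M * Pm) := by rw [hPiP, one_mul]
  have hBd := diag_of_injective hd (key B hBA)
  have hCd := diag_of_injective hd (key C hCA)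
  rw [← hB'] at hBd
  rw [← hC'] at hCd
  set b : Fin n → ℂ := fun i => B' i i
  set c : Fin n → ℂ := fun i => C' i i
  have hbraid' : B' * C' * B' = C' * B' * C' := by
    have h2 : Pi * (B * C * B) * Pm = Pi * (C * B * C) * Pm := by rw [hbraid]
    calc B' * C' * B' = Pi * (B * (Pm * Pi) * (C * (Pm * Pi) * B)) * Pm := by
          rw [hB', hC']; noncomm_ring
      _ = Pi * (B * C * B) * Pm := by rw [hPPi]; noncomm_ring
      _ = Pi * (C * B * C) * Pm := h2
      _ = Pi * (C * (Pm * Pi) * (B * (Pm * Pi) * C)) * Pm := by rw [hPPi]; noncomm_ring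
      _ = C' * B' * C' := by rw [hB', hC']; noncomm_ring
  -- entrywise braid relation
  have hPu : IsUnit Pm := P.isUnit
  have hPiu : IsUnit Pi := (P⁻¹).isUnit
  have hB'u : IsUnit B' := (hPiu.mul hB).mul hPu
  have hC'u : IsUnit C' := (hPiu.mul hC).mul hPu
  have hbne : ∀ i, b i ≠ 0 := by
    intro i hi
    have hdet : B'.det ≠ 0 := hB'u.map (Matrix.detMonoidHom) |>.ne_zero
    rw [hBd, Matrix.det_diagonal] at hdet
    exact hdet (Finset.prod_eq_zero (Finset.mem_univ i) hi)
  have hcne : ∀ i, c i ≠ 0 := by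
    intro i hi
    have hdet : C'.det ≠ 0 := hC'u.map (Matrix.detMonoidHom) |>.ne_zero
    rw [hCd, Matrix.det_diagonal] at hdet
    exact hdet (Finset.prod_eq_zero (Finset.mem_univ i) hi)
  have hbc : b = c := by
    funext i
    have := congrFun (congrFun hbraid' i) i
    rw [hBd, hCd] at this
    simp only [Matrix.diagonal_mul_diagonal, Matrix.diagonal_apply_eq] at this
    have h0 : b i * c i * (b i - c i) = 0 := by ring_nf; linear_combination this
    rcases mul_eq_zero.mp h0 with h' | h'
    · rcases mul_eq_zero.mp h' with h'' | h''
      · exact absurd h'' (hbne i)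
      · exact absurd h'' (hcne i)
    · exact sub_eq_zero.mp h'
  have hBC' : B' = C' := by rw [hBd, hCd]; exact congrArg Matrix.diagonal hbc
  calc B = (Pm * Pi) * B * (Pm * Pi) := by rw [hPPi]; noncomm_ring
    _ = Pm * B' * Pi := by rw [hB']; noncomm_ring
    _ = Pm * C' * Pi := by rw [hBC']
    _ = (Pm * Pi) * C * (Pm * Pi) := by rw [hC']; noncomm_ring
    _ = C := by rw [hPPi]; noncomm_ring
end

section
/- Let λ, μ ∈ ℂ with λ ≠ μ, and let A be the 3 × 3 complex matrix with rows (λ, 0, 0), (0, μ, 1), (0, 0, μ). If B and C are invertible 3 × 3 complex matrices that both commute with A and satisfy BCB = CBC, then B = C. -/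
set_option maxHeartbeats 1000000

lemma comm_struct_case_iii (lam mu : ℂ) (hlm : lam ≠ mu) (M : Matrix (Fin 3) (Fin 3) ℂ)
    (h : M * !![lam, 0, 0; 0, mu, 1; 0, 0, mu] =
      !![lam, 0, 0; 0, mu, 1; 0, 0, mu] * M) :
    M = !![M 0 0, 0, 0; 0, M 1 1, M 1 2; 0, 0, M 1 1] := by
  have key := fun i j => congrFun (congrFun h i) j
  simp only [Matrix.mul_apply, Fin.sum_univ_three] at key
  have sub : lam - mu ≠ 0 := sub_ne_zero.mpr hlm
  have h01 := key 0 1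
  have h02 := key 0 2
  have h10 := key 1 0
  have h11 := key 1 1
  have h12 := key 1 2
  have h20 := key 2 0
  have h22 := key 2 2
  simp [Matrix.vecHead, Matrix.vecTail] at h01 h02 h10 h11 h12 h20 h22
  have e01 : M 0 1 = 0 := by
    have : (lam - mu) * M 0 1 = 0 := by linear_combination -h01
    exact (mul_eq_zero.mp this).resolve_left sub
  have e02 : M 0 2 = 0 := by
    have : (lam - mu) * M 0 2 = 0 := by linear_combination -h02 + e01
    exact (mul_eq_zero.mp this).resolve_left sub
  have e20 : M 2 0 = 0 := by
    have : (lam - mu) * M 2 0 = 0 := by linear_combination h20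
    exact (mul_eq_zero.mp this).resolve_left sub
  have e10 : M 1 0 = 0 := by
    have : (lam - mu) * M 1 0 = 0 := by linear_combination h10 + e20
    exact (mul_eq_zero.mp this).resolve_left sub
  have e21 : M 2 1 = 0 := by linear_combination h22
  have e1122 : M 2 2 = M 1 1 := by linear_combination -h12
  ext i j
  fin_cases i <;> fin_cases j <;>
    simp [Matrix.vecHead, Matrix.vecTail, e01, e02, e10, e20, e21, e1122]

/-- case (iii) of Proposition 4.3: with
`A = [[λ,0,0],[0,μ,1],[0,0,μ]]`, `λ ≠ μ`, any two invertible matrices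
commuting with `A` and satisfying the braid relation are equal. -/
theorem braid_commute_case_iii (lam mu : ℂ) (hlm : lam ≠ mu)
    (B C : Matrix (Fin 3) (Fin 3) ℂ)
    (hB : IsUnit B) (hC : IsUnit C)
    (hBA : B * !![lam, 0, 0; 0, mu, 1; 0, 0, mu] =
      !![lam, 0, 0; 0, mu, 1; 0, 0, mu] * B)
    (hCA : C * !![lam, 0, 0; 0, mu, 1; 0, 0, mu] =
      !![lam, 0, 0; 0, mu, 1; 0, 0, mu] * C)
    (hbraid : B * C * B = C * B * C) :
    B = C := by
  have hBf := comm_struct_case_iii lam mu hlm B hBA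
  have hCf := comm_struct_case_iii lam mu hlm C hCA
  have hcomm : C * B = B * C := by
    rw [hBf, hCf]
    ext i j
    fin_cases i <;> fin_cases j <;>
      simp [Matrix.mul_apply, Fin.sum_univ_three, Matrix.vecHead, Matrix.vecTail] <;> ring
  rw [mul_assoc, mul_assoc, hcomm] at hbraid
  exact (hB.mul hC).mul_right_cancel hbraid
end

section
/- Let λ ∈ ℂ and let A be the 3 × 3 Jordan block with rows (λ, 1, 0), (0, λ, 1), (0, 0, λ). If B and C are invertible 3 × 3 complex matrices that both commute with A and satisfy BCB = CBC, then B = C. -/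
/-- Any matrix commuting with the `3 × 3` Jordan block is upper triangular
Toeplitz. -/
lemma toeplitz_of_commute (lam : ℂ) (M : Matrix (Fin 3) (Fin 3) ℂ)
    (hM : M * !![lam, 1, 0; 0, lam, 1; 0, 0, lam] =
      !![lam, 1, 0; 0, lam, 1; 0, 0, lam] * M) :
    M = !![M 0 0, M 0 1, M 0 2; 0, M 0 0, M 0 1; 0, 0, M 0 0] := by
  have e := fun i j => congrFun (congrFun hM i) j
  have e00 := e 0 0; have e01 := e 0 1; have e02 := e 0 2
  have e10 := e 1 0; have e11 := e 1 1; have e12 := e 1 2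
  simp [Matrix.mul_apply, Fin.sum_univ_three, Matrix.vecHead, Matrix.vecTail]
    at e00 e01 e02 e10 e11 e12
  ext i j
  fin_cases i <;> fin_cases j <;>
    simp [Matrix.vecHead, Matrix.vecTail] <;>
    first
      | linear_combination -e00
      | linear_combination -e01
      | linear_combination -e02
      | linear_combination -e10
      | linear_combination -e11 - e00
      | linear_combination -e12 - e01

/-- case (iv) of Proposition 4.3: with `A` the `3 × 3` Jordan
block with eigenvalue `λ`, any two invertible matrices commuting with `A` and
satisfying the braid relation are equal. -/
theorem braid_commute_jordan_block (lam : ℂ)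
    (B C : Matrix (Fin 3) (Fin 3) ℂ)
    (hB : IsUnit B) (hC : IsUnit C)
    (hBA : B * !![lam, 1, 0; 0, lam, 1; 0, 0, lam] =
      !![lam, 1, 0; 0, lam, 1; 0, 0, lam] * B)
    (hCA : C * !![lam, 1, 0; 0, lam, 1; 0, 0, lam] =
      !![lam, 1, 0; 0, lam, 1; 0, 0, lam] * C)
    (hbraid : B * C * B = C * B * C) :
    B = C := by
  have hBt := toeplitz_of_commute lam B hBA
  have hCt := toeplitz_of_commute lam C hCA
  have hcomm : B * C = C * B := by
    rw [hBt, hCt]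
    ext i j
    fin_cases i <;> fin_cases j <;>
      simp [Matrix.mul_apply, Fin.sum_univ_three, Matrix.vecHead, Matrix.vecTail] <;> ring
  have h2 : B * C * B = B * C * C := by
    rw [hbraid, hcomm]
  exact (hB.mul hC).mul_left_cancel h2
end

section
/- Let G be a group generated by elements t₁, t₂, t₃, t₄, t₅, and set σ = t₁t₂t₃t₄t₅. Assume that σ tᵢ σ⁻¹ = t_{i+1} for 1 ≤ i ≤ 4, that tᵢ t_{i+1} tᵢ = t_{i+1} tᵢ t_{i+1} for 1 ≤ i ≤ 4, and that tᵢ t_j = t_j tᵢ whenever |i − j| ≥ 2. Then the commutator subgroup [G, G] is contained in the normal closure of {σ²} in G; equivalently, the quotient of G by the normal closure of σ² is cyclic, generated by the image of t₁. -/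
/-!
Modulo `σ²`, conjugation by `σ` is an involution that shifts `tᵢ ↦ tᵢ₊₁`, so the images of
`t₁, t₃, t₅` coincide, as do those of `t₂, t₄`. The quotient is then generated by the images of
`t₁` and `t₄`, which commute, so it is abelian.
-/

namespace Subgroup

variable {G : Type*} [Group G]

theorem isMulCommutative_of_closure_eq_top {s : Set G} (hs : closure s = ⊤)
    (hcomm : ∀ x ∈ s, ∀ y ∈ s, Commute x y) : IsMulCommutative G := by
  have hcenter : center G = centralizer s := by
    rw [← centralizer_univ, ← coe_top, ← hs, centralizer_closure]
  refine center_eq_top_iff.mp (eq_top_iff.mpr ?_)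
  rw [← hs, hcenter, closure_le]
  exact fun x hx y hy => (hcomm y hy x hx).eq

theorem commutator_le_of_closure_eq_top {N : Subgroup G} [N.Normal] {s : Set G}
    (hs : closure s = ⊤) (hcomm : ∀ x ∈ s, ∀ y ∈ s, Commute (x : G ⧸ N) y) :
    _root_.commutator G ≤ N := by
  refine Normal.quotient_commutative_iff_commutator_le.mp
    (isMulCommutative_of_closure_eq_top (s := ((↑) : G → G ⧸ N) '' s) ?_ ?_)
  · rw [← QuotientGroup.coe_mk', ← MonoidHom.map_closure, hs, ← MonoidHom.range_eq_map,
      QuotientGroup.range_mk']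
  · rintro _ ⟨x, hx, rfl⟩ _ ⟨y, hy, rfl⟩
    exact hcomm x hx y hy

end Subgroup

theorem eq_of_conj_conj_of_sq_eq_one {G : Type*} [Group G] {σ a b c : G} (hσ : σ ^ 2 = 1)
    (hab : σ * a * σ⁻¹ = b) (hbc : σ * b * σ⁻¹ = c) : c = a :=
  calc c = σ * σ * a * (σ * σ)⁻¹ := by rw [← hbc, ← hab]; group
    _ = a := by rw [← sq, hσ]; group

theorem commutator_le_normalClosure_sigma_sq_general {G : Type*} [Group G]
    (t₁ t₂ t₃ t₄ t₅ : G)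
    (hgen : Subgroup.closure {t₁, t₂, t₃, t₄, t₅} = ⊤)
    (hc1 : (t₁ * t₂ * t₃ * t₄ * t₅) * t₁ * (t₁ * t₂ * t₃ * t₄ * t₅)⁻¹ = t₂)
    (hc2 : (t₁ * t₂ * t₃ * t₄ * t₅) * t₂ * (t₁ * t₂ * t₃ * t₄ * t₅)⁻¹ = t₃)
    (hc3 : (t₁ * t₂ * t₃ * t₄ * t₅) * t₃ * (t₁ * t₂ * t₃ * t₄ * t₅)⁻¹ = t₄)
    (hc4 : (t₁ * t₂ * t₃ * t₄ * t₅) * t₄ * (t₁ * t₂ * t₃ * t₄ * t₅)⁻¹ = t₅)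
    (hc14 : t₁ * t₄ = t₄ * t₁) :
    commutator G ≤ Subgroup.normalClosure {(t₁ * t₂ * t₃ * t₄ * t₅) ^ 2} := by
  set σ := t₁ * t₂ * t₃ * t₄ * t₅
  set N := Subgroup.normalClosure {σ ^ 2}
  have hσ : (σ : G ⧸ N) ^ 2 = 1 :=
    (QuotientGroup.eq_one_iff _).mpr (Subgroup.subset_normalClosure rfl)
  have conj {a b : G} (h : σ * a * σ⁻¹ = b) : (σ : G ⧸ N) * a * (σ : G ⧸ N)⁻¹ = b := by
    rw [← h]; rfl
  have h₃ : (t₃ : G ⧸ N) = t₁ := eq_of_conj_conj_of_sq_eq_one hσ (conj hc1) (conj hc2)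
  have h₄ : (t₄ : G ⧸ N) = t₂ := eq_of_conj_conj_of_sq_eq_one hσ (conj hc2) (conj hc3)
  have h₅ : (t₅ : G ⧸ N) = t₁ := h₃ ▸ eq_of_conj_conj_of_sq_eq_one hσ (conj hc3) (conj hc4)
  have h₁₂ : Commute (t₁ : G ⧸ N) t₂ := h₄ ▸ congrArg ((↑) : G → G ⧸ N) hc14
  have hpair : ∀ x ∈ ({t₁, t₂, t₃, t₄, t₅} : Set G), (x : G ⧸ N) = t₁ ∨ (x : G ⧸ N) = t₂ := by
    rintro x (rfl | rfl | rfl | rfl | rfl) <;> simp [h₃, h₄, h₅]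
  refine Subgroup.commutator_le_of_closure_eq_top hgen fun x hx y hy => ?_
  rcases hpair x hx with hx | hx <;> rcases hpair y hy with hy | hy <;>
    simp [hx, hy, h₁₂, h₁₂.symm]

/-- Lemma 6.1 of the paper, group-theoretic content: if `G` is
generated by `t₁, …, t₅` satisfying the conjugation relations
`σ tᵢ σ⁻¹ = tᵢ₊₁` for `σ = t₁t₂t₃t₄t₅`, the braid relations for adjacent
indices, and commutation for distant indices, then the commutator subgroup of
`G` is contained in the normal closure of `σ²`. -/
theorem commutator_le_normalClosure_sigma_sq {G : Type*} [Group G]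
    (t₁ t₂ t₃ t₄ t₅ : G)
    (hgen : Subgroup.closure {t₁, t₂, t₃, t₄, t₅} = ⊤)
    (hc1 : (t₁ * t₂ * t₃ * t₄ * t₅) * t₁ * (t₁ * t₂ * t₃ * t₄ * t₅)⁻¹ = t₂)
    (hc2 : (t₁ * t₂ * t₃ * t₄ * t₅) * t₂ * (t₁ * t₂ * t₃ * t₄ * t₅)⁻¹ = t₃)
    (hc3 : (t₁ * t₂ * t₃ * t₄ * t₅) * t₃ * (t₁ * t₂ * t₃ * t₄ * t₅)⁻¹ = t₄)
    (hc4 : (t₁ * t₂ * t₃ * t₄ * t₅) * t₄ * (t₁ * t₂ * t₃ * t₄ * t₅)⁻¹ = t₅)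
    (hb1 : t₁ * t₂ * t₁ = t₂ * t₁ * t₂)
    (hb2 : t₂ * t₃ * t₂ = t₃ * t₂ * t₃)
    (hb3 : t₃ * t₄ * t₃ = t₄ * t₃ * t₄)
    (hb4 : t₄ * t₅ * t₄ = t₅ * t₄ * t₅)
    (hc13 : t₁ * t₃ = t₃ * t₁) (hc14 : t₁ * t₄ = t₄ * t₁)
    (hc15 : t₁ * t₅ = t₅ * t₁) (hc24 : t₂ * t₄ = t₄ * t₂)
    (hc25 : t₂ * t₅ = t₅ * t₂) (hc35 : t₃ * t₅ = t₅ * t₃) :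
    commutator G ≤ Subgroup.normalClosure {(t₁ * t₂ * t₃ * t₄ * t₅) ^ 2} :=
  commutator_le_normalClosure_sigma_sq_general t₁ t₂ t₃ t₄ t₅ hgen hc1 hc2 hc3 hc4 hc14
end
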